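/- arXiv:1403.4203 — 2 statements merged into one kernel-verified Lean document; each statement's English description precedes it below -/
import Mathlib

section
/- Assume (F) and (W), and let p:[0,R]→(0,f(ρ̄)] be non-increasing. Suppose there are constants h≥0 and N>0 such that |p(a)−p(b)| ≤ h + N|a−b| for all a,b∈[0,R], and set M := N·‖w‖_{L∞(ℝ₋)}. Let ρ₁, ρ₂ be entropy weak solutions of the constrained Cauchy problem with the same initial datum ρ₀∈L∞(ℝ;[0,R]) and with constraint levels q_i(t)=p(∫_{ℝ₋} w(x)ρ_i(t,x)dx), and assume the stability estimate ‖ρ₁(t,·)−ρ₂(t,·)‖_{L¹(ℝ)} ≤ 2∫_0^t |q₁(s)−q₂(s)| ds holds for all t≥0 (with the left-hand side finite). Then for all t≥0: ‖ρ₁(t,·)−ρ₂(t,·)‖_{L¹(ℝ)} ≤ (h/M)(e^{2Mt}−1). In particular, as the maximal jump size h of p tends to zero, the discrepancy between the two solutions vanishes locally uniformly in t. -/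
open MeasureTheory Set Filter

namespace CRP

noncomputable section

/-- Smooth compactly supported test functions on `ℝ²`. -/
def TestFn (φ : ℝ × ℝ → ℝ) : Prop :=
  ContDiff ℝ (⊤ : ℕ∞) φ ∧ HasCompactSupport φ

/-- Partial derivative of a test function in the first (time) variable. -/
def pdT (φ : ℝ × ℝ → ℝ) (z : ℝ × ℝ) : ℝ := fderiv ℝ φ z (1, 0)

/-- Partial derivative of a test function in the second (space) variable. -/
def pdX (φ : ℝ × ℝ → ℝ) (z : ℝ × ℝ) : ℝ := fderiv ℝ φ z (0, 1)

/-- Assumption (F): `f : [0,R] → [0,∞)` is Lipschitz, `f 0 = 0 = f R`, and there is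
`ρb ∈ (0,R)` with `f' ρ * (ρb - ρ) > 0` for a.e. `ρ ∈ [0,R]`. -/
def AF (R ρb : ℝ) (f : ℝ → ℝ) : Prop :=
  0 < R ∧ (∃ L : NNReal, LipschitzOnWith L f (Icc 0 R)) ∧
    (∀ x ∈ Icc (0:ℝ) R, 0 ≤ f x) ∧ f 0 = 0 ∧ f R = 0 ∧ ρb ∈ Ioo 0 R ∧
    (∀ᵐ x ∂(volume.restrict (Icc (0:ℝ) R)), deriv f x * (ρb - x) > 0)

/-- Assumption (W): `w` is a nonnegative non-decreasing weight on `ℝ₋` with unit integral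
and support in `[-i_w, 0]`. -/
def AW (w : ℝ → ℝ) : Prop :=
  (∀ x ≤ (0:ℝ), 0 ≤ w x) ∧ MonotoneOn w (Iic 0) ∧
    (∫ x in Iic (0:ℝ), w x) = 1 ∧ ∃ iw : ℝ, 0 < iw ∧ ∀ x ≤ -iw, w x = 0

/-- Assumption (P2): `p : [0,R] → (0, fmax]` is non-increasing and piecewise constant
with finitely many jumps (equivalently, it has finitely many values). -/
def AP2 (R fmax : ℝ) (p : ℝ → ℝ) : Prop :=
  AntitoneOn p (Icc 0 R) ∧ (∀ ξ ∈ Icc (0:ℝ) R, p ξ ∈ Ioc 0 fmax) ∧ (p '' Icc 0 R).Finite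

/-- The left limit `p(ξ−)` of a non-increasing piecewise constant `p` on `[0,R]`,
with the convention `p(0−) = p 0`. -/
def pminus (p : ℝ → ℝ) (ξ : ℝ) : ℝ := if ξ ≤ 0 then p 0 else sInf (p '' Ico 0 ξ)

/-- The right limit `p(ξ+)` of a non-increasing piecewise constant `p` on `[0,R]`,
with the convention `p(R+) = p R`. -/
def pplus (R : ℝ) (p : ℝ → ℝ) (ξ : ℝ) : ℝ := if R ≤ ξ then p R else sSup (p '' Ioc ξ R)

/-- `γ` is the left measure-theoretic trace of `ρ` at `x = 0`. -/
def LeftTraceAt (ρ : ℝ → ℝ → ℝ) (γ : ℝ → ℝ) : Prop :=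
  ∀ φ : ℝ × ℝ → ℝ, TestFn φ →
    Tendsto (fun ε : ℝ => (1 / ε) * ∫ t in Ioi (0:ℝ), ∫ x in Ioo (-ε) (0:ℝ),
        |ρ t x - γ t| * φ (t, x)) (nhdsWithin 0 (Ioi 0)) (nhds 0)

/-- `γ` is the right measure-theoretic trace of `ρ` at `x = 0`. -/
def RightTraceAt (ρ : ℝ → ℝ → ℝ) (γ : ℝ → ℝ) : Prop :=
  ∀ φ : ℝ × ℝ → ℝ, TestFn φ →
    Tendsto (fun ε : ℝ => (1 / ε) * ∫ t in Ioi (0:ℝ), ∫ x in Ioo (0:ℝ) ε,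
        |ρ t x - γ t| * φ (t, x)) (nhdsWithin 0 (Ioi 0)) (nhds 0)

/-- The constrained entropy inequality (i), with constraint level `q`, initial datum `ρ0`,
tested on all nonnegative test functions. -/
def EntIneq (R fmax : ℝ) (f q ρ0 : ℝ → ℝ) (ρ : ℝ → ℝ → ℝ) : Prop :=
  ∀ φ : ℝ × ℝ → ℝ, TestFn φ → (∀ z, 0 ≤ φ z) → ∀ k ∈ Icc (0:ℝ) R,
    0 ≤ (∫ t in Ioi (0:ℝ), ∫ x : ℝ,
          (|ρ t x - k| * pdT φ (t, x) +
            Real.sign (ρ t x - k) * (f (ρ t x) - f k) * pdX φ (t, x))) +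
        2 * (∫ t in Ioi (0:ℝ), (1 - q t / fmax) * f k * φ (t, 0)) +
        ∫ x : ℝ, |ρ0 x - k| * φ (0, x)

/-- The constrained entropy inequality (i) on the time interval `[0,T)`: only test
functions supported in `(-∞,T) × ℝ` are used. -/
def EntIneqOn (R fmax T : ℝ) (f q ρ0 : ℝ → ℝ) (ρ : ℝ → ℝ → ℝ) : Prop :=
  ∀ φ : ℝ × ℝ → ℝ, TestFn φ → (∀ z, 0 ≤ φ z) →
    tsupport φ ⊆ Iio T ×ˢ (univ : Set ℝ) → ∀ k ∈ Icc (0:ℝ) R,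
    0 ≤ (∫ t in Ioi (0:ℝ), ∫ x : ℝ,
          (|ρ t x - k| * pdT φ (t, x) +
            Real.sign (ρ t x - k) * (f (ρ t x) - f k) * pdX φ (t, x))) +
        2 * (∫ t in Ioi (0:ℝ), (1 - q t / fmax) * f k * φ (t, 0)) +
        ∫ x : ℝ, |ρ0 x - k| * φ (0, x)

/-- Basic regularity required of solutions: measurability, values in `[0,R]`, and
continuity in time with values in `L¹loc` (on compact sets `[-r,r]`). -/
def RegSol (R : ℝ) (ρ : ℝ → ℝ → ℝ) : Prop :=
  Measurable (Function.uncurry ρ) ∧ (∀ t x, ρ t x ∈ Icc (0:ℝ) R) ∧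
    ∀ r : ℝ, 0 < r → ∀ s : ℝ, 0 ≤ s →
      Tendsto (fun t => ∫ x in Icc (-r) r, |ρ t x - ρ s x|) (nhdsWithin s (Ici 0)) (nhds 0)

/-- `ρ`, with traces `γm`, `γp` at `x = 0`, satisfies the constrained entropy
inequalities with constraint level `q : (0,∞) → [0,fmax]` and initial datum `ρ0`. -/
def CEI (R fmax : ℝ) (f q ρ0 : ℝ → ℝ) (ρ : ℝ → ℝ → ℝ) (γm γp : ℝ → ℝ) : Prop :=
  RegSol R ρ ∧ (∀ t, q t ∈ Icc (0:ℝ) fmax) ∧ EntIneq R fmax f q ρ0 ρ ∧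
    LeftTraceAt ρ γm ∧ RightTraceAt ρ γp ∧
    (∀ᵐ t ∂(volume.restrict (Ioi (0:ℝ))), f (γm t) ≤ q t ∧ f (γp t) ≤ q t)

/-- Same as `CEI`, but on the time interval `[0,T)`. -/
def CEIOn (R fmax T : ℝ) (f q ρ0 : ℝ → ℝ) (ρ : ℝ → ℝ → ℝ) (γm γp : ℝ → ℝ) : Prop :=
  RegSol R ρ ∧ (∀ t, q t ∈ Icc (0:ℝ) fmax) ∧ EntIneqOn R fmax T f q ρ0 ρ ∧
    LeftTraceAt ρ γm ∧ RightTraceAt ρ γp ∧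
    (∀ᵐ t ∂(volume.restrict (Ioo (0:ℝ) T)), f (γm t) ≤ q t ∧ f (γp t) ≤ q t)

/-- The weighted average `ξ(t) = ∫_{ℝ₋} w x * ρ t x dx`. -/
def wAvg (w : ℝ → ℝ) (ρ : ℝ → ℝ → ℝ) (t : ℝ) : ℝ := ∫ x in Iic (0:ℝ), w x * ρ t x

/-- Entropy weak solution of the Cauchy problem with non-local point constraint given by
the (possibly multivalued, filled-in) piecewise constant `p`: there is a constraint level
`q` with `q t ∈ P(ξ(t)) = [p(ξ(t)+), p(ξ(t)−)]` a.e. such that `ρ` satisfies the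
constrained entropy inequalities with constraint level `q`. -/
def EWSol (R fmax : ℝ) (f w p ρ0 : ℝ → ℝ) (ρ : ℝ → ℝ → ℝ) (γm γp : ℝ → ℝ) : Prop :=
  ∃ q : ℝ → ℝ, CEI R fmax f q ρ0 ρ γm γp ∧
    ∀ᵐ t ∂(volume.restrict (Ioi (0:ℝ))),
      q t ∈ Icc (pplus R p (wAvg w ρ t)) (pminus p (wAvg w ρ t))

/-- Entropy weak solution with non-local constraint on the time interval `[0,T)`. -/
def EWSolOn (R fmax T : ℝ) (f w p ρ0 : ℝ → ℝ) (ρ : ℝ → ℝ → ℝ) (γm γp : ℝ → ℝ) : Prop :=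
  ∃ q : ℝ → ℝ, CEIOn R fmax T f q ρ0 ρ γm γp ∧
    ∀ᵐ t ∂(volume.restrict (Ioo (0:ℝ) T)),
      q t ∈ Icc (pplus R p (wAvg w ρ t)) (pminus p (wAvg w ρ t))

/-- The Riemann initial datum. -/
def riem (ρL ρR : ℝ) (x : ℝ) : ℝ := if x < 0 then ρL else ρR

/-- `ρ1 = ρ2` a.e. on `(0,T) × ℝ`. -/
def aeEqOn (T : ℝ) (ρ1 ρ2 : ℝ → ℝ → ℝ) : Prop :=
  ∀ᵐ z ∂((volume : Measure (ℝ × ℝ)).restrict (Ioo (0:ℝ) T ×ˢ (univ : Set ℝ))),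
    ρ1 z.1 z.2 = ρ2 z.1 z.2

/-- Gronwall-type stability bound for two entropy weak solutions with the
same initial datum when the non-local constraint `p` has jumps of size at most `h`:
`‖ρ1(t) − ρ2(t)‖_{L¹} ≤ (h/M) (exp (2Mt) − 1)` with `M = N ‖w‖_{L∞(ℝ₋)}`. -/
theorem stmt14 (R ρb : ℝ) (f w p : ℝ → ℝ) (hF : AF R ρb f) (hW : AW w)
    (hpmono : AntitoneOn p (Icc 0 R))
    (hprange : ∀ ξ ∈ Icc (0:ℝ) R, p ξ ∈ Ioc 0 (f ρb))
    (h N M : ℝ) (hh : 0 ≤ h) (hN : 0 < N)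
    (hpN : ∀ a ∈ Icc (0:ℝ) R, ∀ b ∈ Icc (0:ℝ) R, |p a - p b| ≤ h + N * |a - b|)
    (hM : M = N * (eLpNorm w ⊤ (volume.restrict (Iic 0))).toReal)
    (ρ0 : ℝ → ℝ) (hρ0 : ∀ x, ρ0 x ∈ Icc (0:ℝ) R)
    (ρ1 ρ2 : ℝ → ℝ → ℝ) (γm1 γp1 γm2 γp2 : ℝ → ℝ)
    (hs1 : CEI R (f ρb) f (fun t => p (wAvg w ρ1 t)) ρ0 ρ1 γm1 γp1)
    (hs2 : CEI R (f ρb) f (fun t => p (wAvg w ρ2 t)) ρ0 ρ2 γm2 γp2)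
    (hint : ∀ t, 0 ≤ t → Integrable (fun x => ρ1 t x - ρ2 t x))
    (hstab : ∀ t, 0 ≤ t → (∫ x : ℝ, |ρ1 t x - ρ2 t x|) ≤
      2 * ∫ s in Ioc (0:ℝ) t, |p (wAvg w ρ1 s) - p (wAvg w ρ2 s)|) :
    ∀ t, 0 ≤ t →
      (∫ x : ℝ, |ρ1 t x - ρ2 t x|) ≤ (h / M) * (Real.exp (2 * M * t) - 1) := by
  intro T hT
  obtain ⟨hR, -, -, -, -, hρbm, -⟩ := hF
  obtain ⟨hwpos, hwmono, hwint, -⟩ := hW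
  set μ := volume.restrict (Iic (0:ℝ)) with hμdef
  -- w is integrable on ℝ₋
  have hIw : Integrable w μ := by
    by_contra hc
    rw [MeasureTheory.integral_undef hc] at hwint
    exact one_ne_zero hwint.symm
  have h0R : (0:ℝ) ∈ Icc (0:ℝ) R := ⟨le_rfl, hR.le⟩
  have hB : 0 < f ρb := lt_of_lt_of_le (hprange 0 h0R).1 (hprange 0 h0R).2
  -- monotone (hence measurable) extension of w
  set wext : ℝ → ℝ := fun x => if x ≤ 0 then w x else w 0 with hwextdef
  have hwextmono : Monotone wext := by
    intro a b hab
    simp only [hwextdef]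
    by_cases hb : b ≤ 0
    · rw [if_pos (hab.trans hb), if_pos hb]
      exact hwmono (mem_Iic.mpr (hab.trans hb)) (mem_Iic.mpr hb) hab
    · rw [if_neg hb]
      by_cases ha : a ≤ 0
      · rw [if_pos ha]
        exact hwmono (mem_Iic.mpr ha) (mem_Iic.mpr le_rfl) ha
      · rw [if_neg ha]
  have hwextmeas : Measurable wext := hwextmono.measurable
  have hwextae : wext =ᵐ[μ] w := by
    filter_upwards [MeasureTheory.ae_restrict_mem measurableSet_Iic] with x hx
    exact if_pos hx
  -- generic facts about solutions
  have key : ∀ ρ : ℝ → ℝ → ℝ, Measurable (Function.uncurry ρ) →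
      (∀ t x, ρ t x ∈ Icc (0:ℝ) R) →
      (∀ t, Integrable (fun x => w x * ρ t x) μ) ∧ Measurable (wAvg w ρ) ∧
        (∀ t, wAvg w ρ t ∈ Icc (0:ℝ) R) := by
    intro ρ hm hr
    have hslice : ∀ t, Measurable fun x => ρ t x := fun t =>
      hm.comp measurable_prodMk_left
    have hInt : ∀ t, Integrable (fun x => w x * ρ t x) μ := by
      intro t
      have h2 := hIw.bdd_mul (hslice t).aestronglyMeasurable
        (c := R) (Filter.Eventually.of_forall fun x => by
          rw [Real.norm_eq_abs, abs_of_nonneg (hr t x).1]; exact (hr t x).2)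
      have h3 : (fun x => ρ t x * w x) = fun x => w x * ρ t x :=
        funext fun x => mul_comm _ _
      rwa [h3] at h2
    refine ⟨hInt, ?_, ?_⟩
    · have hcongr : wAvg w ρ = fun t => ∫ x in Iic (0:ℝ), wext x * ρ t x := by
        funext t
        apply MeasureTheory.integral_congr_ae
        filter_upwards [hwextae] with x hx
        rw [hx]
      rw [hcongr]
      have hsm : MeasureTheory.StronglyMeasurable
          (Function.uncurry fun t x => wext x * ρ t x) :=
        ((hwextmeas.comp measurable_snd).mul hm).stronglyMeasurable
      exact hsm.integral_prod_right.measurable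
    · intro t
      constructor
      · apply MeasureTheory.setIntegral_nonneg measurableSet_Iic
        intro x hx
        exact mul_nonneg (hwpos x hx) (hr t x).1
      · have hle : wAvg w ρ t ≤ ∫ x in Iic (0:ℝ), w x * R := by
          apply MeasureTheory.integral_mono_ae (hInt t) (hIw.mul_const R)
          filter_upwards [MeasureTheory.ae_restrict_mem measurableSet_Iic] with x hx
          exact mul_le_mul_of_nonneg_left (hr t x).2 (hwpos x hx)
        calc wAvg w ρ t ≤ ∫ x in Iic (0:ℝ), w x * R := hle
          _ = R := by rw [MeasureTheory.integral_mul_const, hwint, one_mul]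
  obtain ⟨hIw1, hmeasξ1, hξmem1⟩ := key ρ1 hs1.1.1 hs1.1.2.1
  obtain ⟨hIw2, hmeasξ2, hξmem2⟩ := key ρ2 hs2.1.1 hs2.1.2.1
  -- antitone (hence measurable) extension of p
  set pext : ℝ → ℝ := fun x => p (max 0 (min x R)) with hpextdef
  have hclampmem : ∀ x : ℝ, max 0 (min x R) ∈ Icc (0:ℝ) R := fun x =>
    ⟨le_max_left _ _, max_le hR.le (min_le_right _ _)⟩
  have hpextanti : Antitone pext := by
    intro a b hab
    exact hpmono (hclampmem a) (hclampmem b)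
      (max_le_max le_rfl (min_le_min_right _ hab))
  have hpextmeas : Measurable pext := hpextanti.measurable
  have hpexteq : ∀ x ∈ Icc (0:ℝ) R, pext x = p x := by
    intro x hx
    simp only [hpextdef]
    rw [min_eq_left hx.2, max_eq_right hx.1]
  -- the function φ and its properties
  set φ : ℝ → ℝ := fun s => |p (wAvg w ρ1 s) - p (wAvg w ρ2 s)| with hφdef
  have hφnonneg : ∀ s, 0 ≤ φ s := fun s => abs_nonneg _
  have hφmeas : Measurable φ := by
    have : φ = fun s => |pext (wAvg w ρ1 s) - pext (wAvg w ρ2 s)| := by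
      funext s
      rw [hφdef]
      rw [hpexteq _ (hξmem1 s), hpexteq _ (hξmem2 s)]
    rw [this]
    exact ((hpextmeas.comp hmeasξ1).sub (hpextmeas.comp hmeasξ2)).abs
  have hφB : ∀ s, φ s ≤ f ρb := by
    intro s
    have h1 := hprange _ (hξmem1 s)
    have h2 := hprange _ (hξmem2 s)
    rw [hφdef, abs_le]
    constructor <;> [linarith [h1.1, h2.2]; linarith [h1.2, h2.1]]
  have hφint : ∀ a b : ℝ, IntervalIntegrable φ volume a b := by
    intro a b
    rw [intervalIntegrable_iff]
    refine MeasureTheory.Integrable.mono' (g := fun _ => f ρb)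
      ((MeasureTheory.integrableOn_const_iff).mpr (Or.inr ?_))
      hφmeas.aestronglyMeasurable
      (Filter.Eventually.of_forall fun s => ?_)
    · exact measure_Ioc_lt_top
    · rw [Real.norm_eq_abs, abs_of_nonneg (hφnonneg s)]
      exact hφB s
  -- the primitive ψ of φ
  set ψ : ℝ → ℝ := fun t => ∫ s in (0:ℝ)..t, φ s with hψdef
  have hψcont : Continuous ψ := intervalIntegral.continuous_primitive hφint 0
  have hψ0 : ∀ t, 0 ≤ t → 0 ≤ ψ t := fun t ht =>
    intervalIntegral.integral_nonneg ht fun s _ => hφnonneg s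
  have hG2ψ : ∀ s, 0 ≤ s → (∫ x : ℝ, |ρ1 s x - ρ2 s x|) ≤ 2 * ψ s := by
    intro s hs
    have := hstab s hs
    rwa [← intervalIntegral.integral_of_le hs] at this
  -- the essential sup bound on w
  set C : ℝ := (eLpNorm w ⊤ μ).toReal with hCdef
  have hStop : eLpNorm w ⊤ μ = eLpNormEssSup w μ := MeasureTheory.eLpNorm_exponent_top
  have hSfin : eLpNormEssSup w μ < ⊤ := by
    refine lt_of_le_of_lt (MeasureTheory.eLpNormEssSup_le_of_ae_bound (C := w 0) ?_)
      ENNReal.ofReal_lt_top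
    filter_upwards [MeasureTheory.ae_restrict_mem measurableSet_Iic] with x hx
    rw [Real.norm_eq_abs, abs_of_nonneg (hwpos x hx)]
    exact hwmono (mem_Iic.mpr hx) (mem_Iic.mpr le_rfl) hx
  have hwleC : ∀ᵐ x ∂μ, |w x| ≤ C := by
    filter_upwards [MeasureTheory.ae_le_eLpNormEssSup (f := w) (μ := μ)] with x hx
    have h2 : ((‖w x‖₊ : ENNReal)).toReal ≤ (eLpNormEssSup w μ).toReal :=
      ENNReal.toReal_mono hSfin.ne hx
    rw [hCdef, hStop]
    simpa [Real.norm_eq_abs] using h2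
  have hCpos : 0 < C := by
    rcases lt_or_ge 0 C with hC | hC
    · exact hC
    · exfalso
      have hC0 : C = 0 := le_antisymm hC ENNReal.toReal_nonneg
      rw [hCdef, hStop] at hC0
      have : eLpNormEssSup w μ = 0 := by
        rcases (ENNReal.toReal_eq_zero_iff _).mp hC0 with h' | h'
        · exact h'
        · exact absurd h' hSfin.ne
      have hw0 : w =ᵐ[μ] 0 := MeasureTheory.eLpNormEssSup_eq_zero_iff.mp this
      have : (∫ x in Iic (0:ℝ), w x) = 0 := by
        rw [MeasureTheory.integral_congr_ae hw0]
        simp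
      rw [hwint] at this
      exact one_ne_zero this
  have hMC : M = N * C := hM
  have hMpos : 0 < M := by rw [hMC]; exact mul_pos hN hCpos
  -- the key differential inequality for φ
  have hkey : ∀ s, 0 ≤ s → φ s ≤ h + 2 * M * ψ s := by
    intro s hs
    have hd : Integrable (fun x => ρ1 s x - ρ2 s x) := hint s hs
    have h1 : φ s ≤ h + N * |wAvg w ρ1 s - wAvg w ρ2 s| :=
      hpN _ (hξmem1 s) _ (hξmem2 s)
    have hwd : Integrable (fun x => w x * (ρ1 s x - ρ2 s x)) μ := by
      exact ((hIw1 s).sub (hIw2 s)).congr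
        (by filter_upwards with x using (mul_sub _ _ _).symm)
    have hdiff : wAvg w ρ1 s - wAvg w ρ2 s =
        ∫ x in Iic (0:ℝ), w x * (ρ1 s x - ρ2 s x) := by
      rw [show wAvg w ρ1 s = ∫ x in Iic (0:ℝ), w x * ρ1 s x from rfl,
        show wAvg w ρ2 s = ∫ x in Iic (0:ℝ), w x * ρ2 s x from rfl,
        ← MeasureTheory.integral_sub (hIw1 s) (hIw2 s)]
      apply MeasureTheory.integral_congr_ae
      filter_upwards with x
      ring
    have h2 : |wAvg w ρ1 s - wAvg w ρ2 s| ≤ C * ∫ x : ℝ, |ρ1 s x - ρ2 s x| := by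
      rw [hdiff]
      calc |∫ x in Iic (0:ℝ), w x * (ρ1 s x - ρ2 s x)|
          ≤ ∫ x in Iic (0:ℝ), |w x| * |ρ1 s x - ρ2 s x| := by
            have hn := MeasureTheory.norm_integral_le_integral_norm
              (fun x => w x * (ρ1 s x - ρ2 s x)) (μ := μ)
            simp only [Real.norm_eq_abs, abs_mul] at hn
            exact hn
        _ ≤ ∫ x in Iic (0:ℝ), C * |ρ1 s x - ρ2 s x| := by
            apply MeasureTheory.integral_mono_ae
              (hwd.abs.congr (by filter_upwards with x using by rw [abs_mul]))
              ((hd.abs.restrict (s := Iic 0)).const_mul C)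
            filter_upwards [hwleC] with x hx
            exact mul_le_mul_of_nonneg_right hx (abs_nonneg _)
        _ = C * ∫ x in Iic (0:ℝ), |ρ1 s x - ρ2 s x| :=
            MeasureTheory.integral_const_mul C _
        _ ≤ C * ∫ x : ℝ, |ρ1 s x - ρ2 s x| := by
            apply mul_le_mul_of_nonneg_left _ hCpos.le
            exact MeasureTheory.setIntegral_le_integral hd.abs
              (Filter.Eventually.of_forall fun x => abs_nonneg _)
    have h3 : (∫ x : ℝ, |ρ1 s x - ρ2 s x|) ≤ 2 * ψ s := hG2ψ s hs
    have h4 : N * |wAvg w ρ1 s - wAvg w ρ2 s| ≤ M * (2 * ψ s) := by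
      rw [hMC]
      calc N * |wAvg w ρ1 s - wAvg w ρ2 s|
          ≤ N * (C * ∫ x : ℝ, |ρ1 s x - ρ2 s x|) :=
            mul_le_mul_of_nonneg_left h2 hN.le
        _ ≤ N * (C * (2 * ψ s)) := by
            apply mul_le_mul_of_nonneg_left _ hN.le
            exact mul_le_mul_of_nonneg_left h3 hCpos.le
        _ = N * C * (2 * ψ s) := by ring
    calc φ s ≤ h + N * |wAvg w ρ1 s - wAvg w ρ2 s| := h1
      _ ≤ h + M * (2 * ψ s) := by linarith
      _ = h + 2 * M * ψ s := by ring
  -- the function H and Gronwall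
  have hgcont : Continuous fun s => h + 2 * M * ψ s :=
    continuous_const.add (continuous_const.mul hψcont)
  set H : ℝ → ℝ := fun t => ∫ s in (0:ℝ)..t, (h + 2 * M * ψ s) with hHdef
  have hHd : ∀ x : ℝ, HasDerivAt H (h + 2 * M * ψ x) x := fun x =>
    (hgcont.integral_hasStrictDerivAt 0 x).hasDerivAt
  have hHcont : Continuous H :=
    continuous_iff_continuousAt.mpr fun x => (hHd x).continuousAt
  have hψH : ∀ x, 0 ≤ x → ψ x ≤ H x := by
    intro x hx
    exact intervalIntegral.integral_mono_on hx (hφint 0 x)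
      (hgcont.intervalIntegrable 0 x) fun s hs => hkey s hs.1
  have hH0 : ∀ x, 0 ≤ x → 0 ≤ H x := fun x hx => (hψ0 x hx).trans (hψH x hx)
  have grw := norm_le_gronwallBound_of_norm_deriv_right_le (E := ℝ)
    (f := H) (f' := fun s => h + 2 * M * ψ s) (δ := 0) (K := 2 * M) (ε := h)
    (a := 0) (b := T) hHcont.continuousOn
    (fun x _ => (hHd x).hasDerivWithinAt)
    (by simp [hHdef]) ?_ T ⟨hT, le_rfl⟩
  · have hHT : H T ≤ h / (2 * M) * (Real.exp (2 * M * T) - 1) := by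
      have h1 : ‖H T‖ = H T := by
        rw [Real.norm_eq_abs, abs_of_nonneg (hH0 T hT)]
      rw [h1] at grw
      rw [gronwallBound_of_K_ne_0 (by positivity : 2 * M ≠ 0)] at grw
      simpa using grw
    calc (∫ x : ℝ, |ρ1 T x - ρ2 T x|) ≤ 2 * ψ T := hG2ψ T hT
      _ ≤ 2 * H T := by linarith [hψH T hT]
      _ ≤ 2 * (h / (2 * M) * (Real.exp (2 * M * T) - 1)) := by linarith [hHT]
      _ = h / M * (Real.exp (2 * M * T) - 1) := by
          field_simp
  · intro x hx
    have hψx := hψ0 x hx.1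
    have hψHx := hψH x hx.1
    have hHx := hH0 x hx.1
    rw [Real.norm_eq_abs, Real.norm_eq_abs, abs_of_nonneg hHx,
      abs_of_nonneg (by positivity : (0:ℝ) ≤ h + 2 * M * ψ x)]
    nlinarith [hMpos]

end

end CRP
end

section
/- In the two-solver configuration, the following hold: λ_p < f'(ρ_L) < 0 < μ_q < μ_p; for every t>0, ρ_p(t,x)=ρ_q(t,x) for all x outside the interval [λ_p t, μ_p t]; and the L¹ distance between the two profiles grows at most linearly in time: for every t>0, ‖ρ_p(t,·)−ρ_q(t,·)‖_{L¹(ℝ)} ≤ t·[ (f'(ρ_L)−λ_p)(ρ̂₂−ρ_L) + |f'(ρ_L)|(ρ̂₂−ρ̂₁) + μ_q(ρ̌₁−ρ̌₂) + (μ_p−μ_q)(ρ̄−ρ̌₂) ]. -/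
open MeasureTheory Set Filter

namespace CRP

noncomputable section

/-- comparison of the two explicit profiles produced by the Riemann
solvers `𝓡^p` and `𝓡^q` in the two-solver configuration: ordering of the wave speeds,
coincidence of the profiles outside `[λ_p t, μ_p t]`, and at most linear (in time)
growth of the `L¹` distance between the two profiles. -/
theorem stmt15 (R ρb p1 p2 ρL ρh1 ρh2 ρc1 ρc2 lp mp mq : ℝ) (f g : ℝ → ℝ)
    (hR : 0 < R) (hf : ContDiffOn ℝ 1 f (Icc 0 R)) (hf0 : f 0 = 0) (hfR : f R = 0)
    (hfpos : ∀ x ∈ Icc (0:ℝ) R, 0 ≤ f x)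
    (hconc : StrictAntiOn (deriv f) (Icc 0 R))
    (hρb : ρb ∈ Ioo 0 R) (hmax : ∀ x ∈ Icc (0:ℝ) R, x ≠ ρb → f x < f ρb)
    (hp2 : 0 < p2) (hp12 : p2 < p1) (hp1 : p1 ≤ f ρb)
    (hρL : ρL ∈ Ioo ρb R) (hfL1 : p2 < f ρL) (hfL2 : f ρL < p1)
    (hρh1 : ρh1 ∈ Ioo ρb R) (hρh2 : ρh2 ∈ Ioo ρb R)
    (hρc1 : ρc1 ∈ Ioo (0:ℝ) ρb) (hρc2 : ρc2 ∈ Ioo (0:ℝ) ρb)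
    (hfh1 : f ρh1 = p1) (hfh2 : f ρh2 = p2) (hfc1 : f ρc1 = p1) (hfc2 : f ρc2 = p2)
    (hord : ρc2 < ρc1 ∧ ρc1 < ρb ∧ ρb < ρh1 ∧ ρh1 < ρL ∧ ρL < ρh2)
    (hg : ∀ y ∈ Icc (0:ℝ) R, g (deriv f y) = y)
    (hlp : lp = (p2 - f ρL) / (ρh2 - ρL))
    (hmp : mp = (f ρb - p2) / (ρb - ρc2))
    (hmq : mq = (f ρb - p1) / (ρb - ρc1))
    (ρp ρq : ℝ → ℝ → ℝ)
    (hρp : ∀ t, 0 < t → ∀ x, ρp t x =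
      if x < lp * t then ρL
      else if x < 0 then ρh2
      else if x < mp * t then ρc2
      else ρb)
    (hρq : ∀ t, 0 < t → ∀ x, ρq t x =
      if x < deriv f ρL * t then ρL
      else if x < deriv f ρh1 * t then g (x / t)
      else if x < 0 then ρh1
      else if x < mq * t then ρc1
      else ρb) :
    (lp < deriv f ρL ∧ deriv f ρL < 0 ∧ 0 < mq ∧ mq < mp) ∧
    (∀ t, 0 < t → ∀ x, x ∉ Icc (lp * t) (mp * t) → ρp t x = ρq t x) ∧
    (∀ t, 0 < t → (∫ x : ℝ, |ρp t x - ρq t x|) ≤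
      t * ((deriv f ρL - lp) * (ρh2 - ρL) + |deriv f ρL| * (ρh2 - ρh1) +
        mq * (ρc1 - ρc2) + (mp - mq) * (ρb - ρc2))) := by
  obtain ⟨hc21, hc1b, hbh1, hh1L, hLh2⟩ := hord
  have hb0 : (0:ℝ) < ρb := hρb.1
  have hbR : ρb < R := hρb.2
  -- memberships
  have mL : ρL ∈ Icc (0:ℝ) R := ⟨le_of_lt (lt_trans hb0 hρL.1), hρL.2.le⟩
  have mh1 : ρh1 ∈ Icc (0:ℝ) R := ⟨le_of_lt (lt_trans hb0 hρh1.1), hρh1.2.le⟩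
  have mh2 : ρh2 ∈ Icc (0:ℝ) R := ⟨le_of_lt (lt_trans hb0 hρh2.1), hρh2.2.le⟩
  have mc1 : ρc1 ∈ Icc (0:ℝ) R := ⟨hρc1.1.le, le_of_lt (lt_trans hρc1.2 hbR)⟩
  have mc2 : ρc2 ∈ Icc (0:ℝ) R := ⟨hρc2.1.le, le_of_lt (lt_trans hρc2.2 hbR)⟩
  have mb : ρb ∈ Icc (0:ℝ) R := ⟨hb0.le, hbR.le⟩
  -- MVT helper
  have hdiffOn : DifferentiableOn ℝ f (Icc 0 R) := hf.differentiableOn one_ne_zero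
  have mvt : ∀ u v : ℝ, 0 ≤ u → v ≤ R → u < v →
      ∃ c ∈ Ioo u v, deriv f c = (f v - f u) / (v - u) := by
    intro u v hu hv huv
    refine exists_deriv_eq_slope f huv (hf.continuousOn.mono (Icc_subset_Icc hu hv)) ?_
    intro x hx
    exact (hdiffOn.differentiableAt (Icc_mem_nhds (lt_of_le_of_lt hu hx.1)
      (lt_of_lt_of_le hx.2 hv))).differentiableWithinAt
  -- p1 < f ρb
  have hp1lt : p1 < f ρb := by
    have := hmax ρc1 mc1 (ne_of_lt hc1b)
    rw [hfc1] at this; exact this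
  -- claim A : lp < deriv f ρL
  have hA : lp < deriv f ρL := by
    obtain ⟨c, hc, hcs⟩ := mvt ρL ρh2 mL.1 mh2.2 hLh2
    have hlc : deriv f c = lp := by rw [hcs, hfh2, hlp]
    have : deriv f c < deriv f ρL :=
      hconc mL ⟨le_trans mL.1 hc.1.le, le_trans hc.2.le mh2.2⟩ hc.1
    linarith
  -- claim B : deriv f ρL < 0
  have hB : deriv f ρL < 0 := by
    obtain ⟨c, hc, hcs⟩ := mvt ρb ρL mb.1 mL.2 hρL.1
    have hfLb : f ρL < f ρb := hmax ρL mL (ne_of_gt hρL.1)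
    have hcneg : deriv f c < 0 := by
      rw [hcs]; exact div_neg_of_neg_of_pos (by linarith) (by linarith [hρL.1])
    have : deriv f ρL < deriv f c :=
      hconc ⟨le_trans mb.1 hc.1.le, le_trans hc.2.le mL.2⟩ mL hc.2
    linarith
  -- deriv f ρh1 facts
  have hLh1' : deriv f ρL < deriv f ρh1 := hconc mh1 mL hh1L
  have hE : deriv f ρh1 < 0 := by
    obtain ⟨c, hc, hcs⟩ := mvt ρb ρh1 mb.1 mh1.2 hbh1
    have hcneg : deriv f c < 0 := by
      rw [hcs, hfh1]; exact div_neg_of_neg_of_pos (by linarith) (by linarith)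
    have : deriv f ρh1 < deriv f c :=
      hconc ⟨le_trans mb.1 hc.1.le, le_trans hc.2.le mh1.2⟩ mh1 hc.2
    linarith
  -- claim C : 0 < mq
  have hC : 0 < mq := by
    rw [hmq]; exact div_pos (by linarith) (by linarith)
  -- claim D : mq < mp
  have hD : mq < mp := by
    obtain ⟨c, hc, hcs⟩ := mvt ρc1 ρb mc1.1 mb.2 hc1b
    obtain ⟨d, hd, hds⟩ := mvt ρc2 ρc1 mc2.1 mc1.2 hc21
    have hdc : deriv f c < deriv f d :=
      hconc ⟨le_trans mc2.1 hd.1.le, le_trans hd.2.le mc1.2⟩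
        ⟨le_trans mc1.1 hc.1.le, le_trans hc.2.le mb.2⟩ (lt_trans hd.2 hc.1)
    have h1 : deriv f c = mq := by rw [hcs, hfc1, hmq]
    have h2 : deriv f d * (ρc1 - ρc2) = p1 - p2 := by
      rw [hds, div_mul_cancel₀]; · rw [hfc1, hfc2]
      · exact ne_of_gt (by linarith)
    have h3 : mq * (ρb - ρc1) = f ρb - p1 := by
      rw [hmq, div_mul_cancel₀]; exact ne_of_gt (by linarith)
    have h4 : mp * (ρb - ρc2) = f ρb - p2 := by
      rw [hmp, div_mul_cancel₀]; exact ne_of_gt (by linarith)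
    have hs : mq < deriv f d := h1 ▸ hdc
    have key : mq * (ρb - ρc2) < mp * (ρb - ρc2) := by
      nlinarith [mul_pos (sub_pos.2 hs) (sub_pos.2 hc21)]
    exact (mul_lt_mul_iff_of_pos_right (by linarith : (0:ℝ) < ρb - ρc2)).1 key
  refine ⟨⟨hA, hB, hC, hD⟩, ?_, ?_⟩
  · -- Part 2
    intro t ht x hx
    rw [hρp t ht x, hρq t ht x]
    rw [mem_Icc, not_and_or, not_le, not_le] at hx
    have hlt1 : lp * t < deriv f ρL * t := mul_lt_mul_of_pos_right hA ht
    have hlt2 : deriv f ρL * t < deriv f ρh1 * t := mul_lt_mul_of_pos_right hLh1' ht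
    have hlt3 : deriv f ρh1 * t < 0 := mul_neg_of_neg_of_pos hE ht
    have hlt4 : (0:ℝ) < mq * t := mul_pos hC ht
    have hlt5 : mq * t < mp * t := mul_lt_mul_of_pos_right hD ht
    rcases hx with hx | hx
    · rw [if_pos hx, if_pos (by linarith)]
    · rw [if_neg (by linarith), if_neg (by linarith), if_neg (by linarith),
        if_neg (by linarith), if_neg (by linarith), if_neg (by linarith), if_neg (by linarith)]
  · -- Part 3
    -- continuity of deriv f on [ρh1, ρL] and inverse bounds
    have hdc : ContinuousOn (deriv f) (Icc ρh1 ρL) := by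
      have h1 : ContinuousOn (derivWithin f (Icc 0 R)) (Icc 0 R) :=
        hf.continuousOn_derivWithin (uniqueDiffOn_Icc hR) le_rfl
      refine (h1.mono (Icc_subset_Icc mh1.1 mL.2)).congr ?_
      intro x hx
      exact (derivWithin_of_mem_nhds (Icc_mem_nhds (lt_of_lt_of_le (lt_trans hb0 hρh1.1) hx.1)
        (lt_of_le_of_lt hx.2 hρL.2))).symm
    have hgval : ∀ s, deriv f ρL ≤ s → s ≤ deriv f ρh1 → ρh1 ≤ g s ∧ g s ≤ ρL := by
      intro s h1 h2
      obtain ⟨y, hy, hys⟩ := intermediate_value_Icc' hh1L.le hdc ⟨h1, h2⟩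
      have hgs : g s = y := by
        rw [← hys]; exact hg y ⟨le_trans mh1.1 hy.1, le_trans hy.2 mL.2⟩
      rw [hgs]; exact hy
    intro t ht
    set a := lp * t with ha
    set b := deriv f ρL * t with hbdef
    set b1 := deriv f ρh1 * t with hb1
    set d := mq * t with hd
    set e := mp * t with he
    have hab : a < b := by rw [ha, hbdef]; exact mul_lt_mul_of_pos_right hA ht
    have hbb1 : b < b1 := by rw [hbdef, hb1]; exact mul_lt_mul_of_pos_right hLh1' ht
    have hb10 : b1 < 0 := mul_neg_of_neg_of_pos hE ht
    have h0d : (0:ℝ) < d := mul_pos hC ht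
    have hde : d < e := by rw [hd, he]; exact mul_lt_mul_of_pos_right hD ht
    set k1 := ρh2 - ρL with hk1
    set k2 := ρh2 - ρh1 with hk2
    set k3 := ρc1 - ρc2 with hk3
    set k4 := ρb - ρc2 with hk4
    have hk1n : 0 ≤ k1 := by rw [hk1]; linarith
    have hk2n : 0 ≤ k2 := by rw [hk2]; linarith
    have hk3n : 0 ≤ k3 := by rw [hk3]; linarith
    have hk4n : 0 ≤ k4 := by rw [hk4]; linarith
    set F : ℝ → ℝ := fun x => (Ico a b).indicator (fun _ => k1) x
      + (Ico b (0:ℝ)).indicator (fun _ => k2) x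
      + (Ico (0:ℝ) d).indicator (fun _ => k3) x
      + (Ico d e).indicator (fun _ => k4) x with hFdef
    have hF0 : ∀ x, 0 ≤ F x := by
      intro x
      have i1 := Set.indicator_nonneg (fun _ _ => hk1n) (s := Ico a b) x
      have i2 := Set.indicator_nonneg (fun _ _ => hk2n) (s := Ico b (0:ℝ)) x
      have i3 := Set.indicator_nonneg (fun _ _ => hk3n) (s := Ico (0:ℝ) d) x
      have i4 := Set.indicator_nonneg (fun _ _ => hk4n) (s := Ico d e) x
      rw [hFdef]; dsimp only; positivity
    have iInt : ∀ (u v c : ℝ), Integrable ((Ico u v).indicator (fun _ => c)) := by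
      intro u v c
      refine IntegrableOn.integrable_indicator ?_ measurableSet_Ico
      exact integrableOn_const measure_Ico_lt_top.ne
    have hFint : Integrable F := by
      rw [hFdef]
      exact (((iInt a b k1).add (iInt b 0 k2)).add (iInt 0 d k3)).add (iInt d e k4)
    have hbound : ∀ x, |ρp t x - ρq t x| ≤ F x := by
      intro x
      rw [hρp t ht x, hρq t ht x]
      rcases lt_or_ge x a with h1 | h1
      · rw [if_pos h1, if_pos (show x < deriv f ρL * t by rw [← hbdef]; linarith)]
        simpa using hF0 x
      · rcases lt_or_ge x b with h2 | h2
        · rw [if_neg (not_lt.2 h1), if_pos (show x < (0:ℝ) by linarith),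
            if_pos (show x < deriv f ρL * t by rw [← hbdef]; exact h2)]
          have hFx : F x = k1 := by
            rw [hFdef]; dsimp only
            rw [Set.indicator_of_mem (by exact ⟨h1, h2⟩) (fun _ => k1),
              Set.indicator_of_notMem (by rw [mem_Ico]; push_neg; intro h; linarith) (fun _ => k2),
              Set.indicator_of_notMem (by rw [mem_Ico]; push_neg; intro h; linarith) (fun _ => k3),
              Set.indicator_of_notMem (by rw [mem_Ico]; push_neg; intro h; linarith) (fun _ => k4)]
            ring
          rw [hFx, hk1, abs_of_pos (by linarith)]
        · have hFx : F x ≥ k2 → |ρh2 - ρq t x| ≤ F x → True := fun _ _ => trivial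
          clear hFx
          rcases lt_or_ge x 0 with h3 | h3
          · -- b ≤ x < 0 : ρp = ρh2
            have hFx : F x = k2 := by
              rw [hFdef]; dsimp only
              rw [Set.indicator_of_notMem (by rw [mem_Ico]; push_neg; intro h; linarith) (fun _ => k1),
                Set.indicator_of_mem (by exact ⟨h2, h3⟩) (fun _ => k2),
                Set.indicator_of_notMem (by rw [mem_Ico]; push_neg; intro h; linarith) (fun _ => k3),
                Set.indicator_of_notMem (by rw [mem_Ico]; push_neg; intro h; linarith) (fun _ => k4)]
              ring
            rw [if_neg (not_lt.2 h1), if_pos h3,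
              if_neg (show ¬ x < deriv f ρL * t by rw [← hbdef]; exact not_lt.2 h2), hFx]
            rcases lt_or_ge x (deriv f ρh1 * t) with h4 | h4
            · rw [if_pos h4]
              have hs1' : deriv f ρL ≤ x / t := by
                rw [le_div_iff₀ ht]; linarith [h2]
              have hs2 : x / t ≤ deriv f ρh1 := by
                rw [div_le_iff₀ ht]; linarith [h4]
              obtain ⟨hy1, hy2⟩ := hgval (x / t) hs1' hs2
              rw [abs_of_pos (by linarith), hk2]; linarith
            · rw [if_neg (not_lt.2 h4), if_pos h3, hk2, abs_of_pos (by linarith)]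
          · -- 0 ≤ x
            rw [if_neg (not_lt.2 h1), if_neg (not_lt.2 h3),
              if_neg (show ¬ x < deriv f ρL * t by rw [← hbdef]; push_neg; linarith),
              if_neg (show ¬ x < deriv f ρh1 * t by rw [← hb1] at *; push_neg; linarith),
              if_neg (not_lt.2 h3)]
            rcases lt_or_ge x d with h4 | h4
            · have hFx : F x = k3 := by
                rw [hFdef]; dsimp only
                rw [Set.indicator_of_notMem (by rw [mem_Ico]; push_neg; intro h; linarith) (fun _ => k1),
                  Set.indicator_of_notMem (by rw [mem_Ico]; push_neg; intro h; linarith) (fun _ => k2),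
                  Set.indicator_of_mem (by exact ⟨h3, h4⟩) (fun _ => k3),
                  Set.indicator_of_notMem (by rw [mem_Ico]; push_neg; intro h; linarith) (fun _ => k4)]
                ring
              rw [if_pos (show x < mp * t by rw [← he]; linarith),
                if_pos (show x < mq * t by rw [← hd]; exact h4), hFx, hk3,
                abs_sub_comm, abs_of_pos (by linarith)]
            · rcases lt_or_ge x e with h5 | h5
              · have hFx : F x = k4 := by
                  rw [hFdef]; dsimp only
                  rw [Set.indicator_of_notMem (by rw [mem_Ico]; push_neg; intro h; linarith) (fun _ => k1),
                    Set.indicator_of_notMem (by rw [mem_Ico]; push_neg; intro h; linarith) (fun _ => k2),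
                    Set.indicator_of_notMem (by rw [mem_Ico]; push_neg; intro h; linarith) (fun _ => k3),
                    Set.indicator_of_mem (by exact ⟨h4, h5⟩) (fun _ => k4)]
                  ring
                rw [if_pos (show x < mp * t by rw [← he]; exact h5),
                  if_neg (show ¬ x < mq * t by rw [← hd]; exact not_lt.2 h4), hFx, hk4,
                  abs_sub_comm, abs_of_pos (by linarith)]
              · rw [if_neg (show ¬ x < mp * t by rw [← he]; exact not_lt.2 h5),
                  if_neg (show ¬ x < mq * t by rw [← hd]; push_neg; linarith)]
                simpa using hF0 x
    have hmono : (∫ x : ℝ, |ρp t x - ρq t x|) ≤ ∫ x, F x :=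
      integral_mono_of_nonneg (Eventually.of_forall fun x => abs_nonneg _) hFint
        (Eventually.of_forall hbound)
    have hIval : ∀ (u v c : ℝ), u ≤ v → (∫ x, (Ico u v).indicator (fun _ => c) x) = (v - u) * c := by
      intro u v c huv
      rw [integral_indicator_const c measurableSet_Ico, Real.volume_real_Ico,
        max_eq_left (by linarith), smul_eq_mul]
    have hFval : (∫ x, F x) = (b - a) * k1 + (0 - b) * k2 + (d - 0) * k3 + (e - d) * k4 := by
      have hrfl : (∫ x, F x) = ∫ x, ((Ico a b).indicator (fun _ => k1)
          + (Ico b (0:ℝ)).indicator (fun _ => k2) + (Ico (0:ℝ) d).indicator (fun _ => k3)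
          + (Ico d e).indicator (fun _ => k4)) x := rfl
      rw [hrfl,
        integral_add' (((iInt a b k1).add (iInt b 0 k2)).add (iInt 0 d k3)) (iInt d e k4),
        integral_add' ((iInt a b k1).add (iInt b 0 k2)) (iInt 0 d k3),
        integral_add' (iInt a b k1) (iInt b 0 k2),
        hIval a b k1 hab.le, hIval b 0 k2 (by linarith), hIval 0 d k3 h0d.le,
        hIval d e k4 hde.le]
    refine le_trans hmono ?_
    rw [hFval, abs_of_neg hB, ha, hbdef, hd, he, hk1, hk2, hk3, hk4]
    apply le_of_eq; ring

end

end CRP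
end
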